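/- Let p(x) = 1/(2x²) and h(x) = c₂ Φ̄(x) with c₂ = (1/(4Φ̄(√2)))·(1 + (1 + r(√3))/250). Then h(x)/p(x) attains its minimum over [1, √2] at an endpoint, and min(h(1)/p(1), h(√2)/p(√2)) > 1; consequently p(x) < h(x) for all x ∈ (1, √2). -/

import Mathlib

/-!
Since `h x / p x = 2 c₂ x² Φ̄(x)`, the first claim is concavity of `x² Φ̄(x)` on `[1, √2]`: its
second derivative `2Φ̄ - 4xφ + x³φ` is at most `φ (x⁴ - 4x² + 2) / x < 0` by the Mills inequality
`x Φ̄ ≤ φ`. At `√2` the ratio is `1 + (1 + r(√3)) / 250` by the choice of `c₂`; at `1` it exceeds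
`251 Φ̄(1) / (500 Φ̄(√2))`, and `500 Φ̄(√2) < 251 Φ̄(1)` follows from two bounds in units of `φ(√2)`:
the midpoint rule for `φ`, convex on `[1, ∞)`, gives `Φ̄(1) - Φ̄(√2) ≥ (√2 - 1) e^((5 - 2√2)/8) φ(√2)`,
and a convergent of Laplace's continued fraction gives `Φ̄(√2) ≤ (5√2 / 13) φ(√2)`.
-/

open MeasureTheory Real Set

noncomputable def phi (x : ℝ) : ℝ := Real.exp (-x^2/2) / Real.sqrt (2*Real.pi)
noncomputable def Phibar (x : ℝ) : ℝ := ∫ u in Set.Ioi x, phi u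
noncomputable def mills (x : ℝ) : ℝ := phi x / Phibar x
noncomputable def c1 : ℝ := 1 / (4 * Phibar (Real.sqrt 2))
noncomputable def c2 : ℝ := c1 * (1 + (1 + mills (Real.sqrt 3))/250)
noncomputable def h (x : ℝ) : ℝ := c2 * Phibar x
noncomputable def p (x : ℝ) : ℝ := 1 / (2 * x^2)

open Filter Topology

theorem setIntegral_Ioi_le_of_hasDerivAt {f F F' : ℝ → ℝ} {a : ℝ}
    (hF : ∀ x ∈ Ici a, HasDerivAt F (F' x) x) (hf : ∀ x ∈ Ioi a, 0 ≤ f x)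
    (hfF : ∀ x ∈ Ioi a, f x ≤ -F' x) (hlim : Tendsto F atTop (𝓝 0)) :
    ∫ x in Ioi a, f x ≤ F a := by
  have hF' : ∀ x ∈ Ici a, HasDerivAt (fun y => -F y) (-F' x) x := fun x hx => (hF x hx).neg
  have hpos : ∀ x ∈ Ioi a, 0 ≤ -F' x := fun x hx => (hf x hx).trans (hfF x hx)
  have hlim' : Tendsto (fun y => -F y) atTop (𝓝 0) := by simpa using hlim.neg
  calc ∫ x in Ioi a, f x ≤ ∫ x in Ioi a, -F' x :=
        integral_mono_of_nonneg ((ae_restrict_iff' measurableSet_Ioi).2 (ae_of_all _ hf))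
          (integrableOn_Ioi_deriv_of_nonneg' hF' hpos hlim')
          ((ae_restrict_iff' measurableSet_Ioi).2 (ae_of_all _ hfF))
    _ = F a := by rw [integral_Ioi_of_hasDerivAt_of_nonneg' hF' hpos hlim']; simp

theorem ConvexOn.mul_midpoint_le_intervalIntegral {f : ℝ → ℝ} {a b : ℝ} (hab : a ≤ b)
    (hf : ConvexOn ℝ (Icc a b) f) (hint : IntervalIntegrable f volume a b) :
    (b - a) * f ((a + b) / 2) ≤ ∫ x in a..b, f x := by
  have hrefl : ∫ x in a..b, f (a + b - x) = ∫ x in a..b, f x := by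
    simp [intervalIntegral.integral_comp_sub_left]
  have hint' : IntervalIntegrable (fun x => f (a + b - x)) volume a b := by
    simpa using (hint.comp_sub_left (a + b)).symm
  have hpt : ∀ x ∈ Icc a b, 2 * f ((a + b) / 2) ≤ f x + f (a + b - x) := by
    intro x hx
    have hx' : a + b - x ∈ Icc a b := ⟨by linarith [hx.2], by linarith [hx.1]⟩
    have := hf.2 hx hx' (by norm_num : (0 : ℝ) ≤ 1 / 2) (by norm_num : (0 : ℝ) ≤ 1 / 2)
      (by norm_num)
    simp only [smul_eq_mul] at this
    rw [← mul_add, add_sub_cancel, one_div_mul_eq_div] at this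
    linarith
  have := intervalIntegral.integral_mono_on hab intervalIntegrable_const (hint.add hint') hpt
  rw [intervalIntegral.integral_add hint hint', hrefl, intervalIntegral.integral_const,
    smul_eq_mul] at this
  linarith

theorem phi_pos (x : ℝ) : 0 < phi x := by unfold phi; positivity

theorem phi_eq_mul_exp (x y : ℝ) : phi x = phi y * exp ((y ^ 2 - x ^ 2) / 2) := by
  unfold phi
  rw [div_mul_eq_mul_div, ← exp_add]
  ring_nf

theorem hasDerivAt_phi (x : ℝ) : HasDerivAt phi (-x * phi x) x := by
  have := (((hasDerivAt_pow 2 x).fun_neg.div_const 2).exp).div_const (√(2 * π))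
  unfold phi
  refine this.congr_deriv ?_
  push_cast
  ring

theorem continuous_phi : Continuous phi :=
  continuous_iff_continuousAt.2 fun x => (hasDerivAt_phi x).continuousAt

theorem integrable_phi : Integrable phi := by
  convert (integrable_exp_neg_mul_sq (b := 1 / 2) (by norm_num)).div_const (√(2 * π)) using 2
  simp only [phi]; ring_nf

theorem tendsto_phi_atTop : Tendsto phi atTop (𝓝 0) := by
  have := (tendsto_exp_neg_atTop_nhds_zero.comp
    ((tendsto_pow_atTop two_ne_zero).atTop_div_const two_pos)).div_const (√(2 * π))
  rw [zero_div] at this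
  convert this using 2
  simp [phi, neg_div]

theorem Phibar_sub_Phibar (a b : ℝ) : Phibar a - Phibar b = ∫ u in a..b, phi u :=
  intervalIntegral.integral_Ioi_sub_Ioi' integrable_phi.integrableOn integrable_phi.integrableOn

theorem hasDerivAt_Phibar (x : ℝ) : HasDerivAt Phibar (-phi x) x := by
  have := (intervalIntegral.integral_hasDerivAt_right (continuous_phi.intervalIntegrable 0 x)
    (continuous_phi.stronglyMeasurableAtFilter _ _) continuous_phi.continuousAt).const_sub
    (Phibar 0)
  have hPhibar : Phibar = fun y => Phibar 0 - ∫ u in (0 : ℝ)..y, phi u :=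
    funext fun y => by rw [← Phibar_sub_Phibar]; ring
  rwa [hPhibar]

theorem Phibar_pos (x : ℝ) : 0 < Phibar x := by
  have hslab : 0 < ∫ u in x..x + 1, phi u :=
    intervalIntegral.intervalIntegral_pos_of_pos (continuous_phi.intervalIntegrable _ _) phi_pos
      (lt_add_one x)
  have htail : 0 ≤ Phibar (x + 1) :=
    setIntegral_nonneg measurableSet_Ioi fun u _ => (phi_pos u).le
  linarith [Phibar_sub_Phibar x (x + 1)]

/-- The fifth convergent of Laplace's continued fraction `1/(x+1/(x+2/(x+3/(x+⋯))))` for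
`Phibar x / phi x` (the reciprocal of `mills x`). It is an upper bound because
`(laplaceUpper · phi)' = -(1 + 120 / (x^5 + 10x^3 + 15x)^2) · phi`. -/
noncomputable def laplaceUpper (x : ℝ) : ℝ := (x ^ 4 + 9 * x ^ 2 + 8) / (x ^ 5 + 10 * x ^ 3 + 15 * x)

theorem hasDerivAt_laplaceUpper_mul_phi {x : ℝ} (hx : x ≠ 0) :
    HasDerivAt (fun u => laplaceUpper u * phi u)
      (-(1 + 120 / (x ^ 5 + 10 * x ^ 3 + 15 * x) ^ 2) * phi x) x := by
  have hD : x ^ 5 + 10 * x ^ 3 + 15 * x ≠ 0 := by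
    rw [show x ^ 5 + 10 * x ^ 3 + 15 * x = x * (x ^ 4 + 10 * x ^ 2 + 15) by ring]
    exact mul_ne_zero hx (by positivity)
  have hN : HasDerivAt (fun u : ℝ => u ^ 4 + 9 * u ^ 2 + 8) (4 * x ^ 3 + 18 * x) x := by
    refine (((hasDerivAt_pow 4 x).fun_add ((hasDerivAt_pow 2 x).const_mul 9)).add_const 8
      ).congr_deriv ?_
    push_cast; ring
  have hD' : HasDerivAt (fun u : ℝ => u ^ 5 + 10 * u ^ 3 + 15 * u)
      (5 * x ^ 4 + 30 * x ^ 2 + 15) x := by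
    refine (((hasDerivAt_pow 5 x).fun_add ((hasDerivAt_pow 3 x).const_mul 10)).fun_add
      ((hasDerivAt_id x).const_mul 15)).congr_deriv ?_
    push_cast; ring
  refine ((hN.fun_div hD' hD).fun_mul (hasDerivAt_phi x)).congr_deriv ?_
  field_simp
  ring

theorem Phibar_le_laplaceUpper_mul_phi {x : ℝ} (hx : 0 < x) : Phibar x ≤ laplaceUpper x * phi x := by
  refine setIntegral_Ioi_le_of_hasDerivAt
    (fun u hu => hasDerivAt_laplaceUpper_mul_phi (hx.trans_le hu).ne') (fun u _ => (phi_pos u).le)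
    (fun u hu => ?_) ?_
  · have := phi_pos u
    have : 0 ≤ 120 / (u ^ 5 + 10 * u ^ 3 + 15 * u) ^ 2 * phi u := by positivity
    linarith
  · refine tendsto_of_tendsto_of_tendsto_of_le_of_le' tendsto_const_nhds tendsto_phi_atTop ?_ ?_
    all_goals filter_upwards [eventually_ge_atTop 1] with u hu
    · exact mul_nonneg (by unfold laplaceUpper; positivity) (phi_pos u).le
    · refine mul_le_of_le_one_left (phi_pos u).le ((div_le_one (by positivity)).2 ?_)
      nlinarith [pow_le_pow_left₀ zero_le_one hu 4, pow_le_pow_left₀ zero_le_one hu 5,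
        pow_le_pow_left₀ zero_le_one hu 3, pow_le_pow_left₀ zero_le_one hu 2]

theorem mul_Phibar_le_phi {x : ℝ} (hx : 0 < x) : x * Phibar x ≤ phi x := by
  have hle : x * laplaceUpper x ≤ 1 := by
    rw [laplaceUpper, mul_div_assoc', div_le_one (by positivity)]
    nlinarith [pow_pos hx 3]
  calc x * Phibar x ≤ x * (laplaceUpper x * phi x) :=
        mul_le_mul_of_nonneg_left (Phibar_le_laplaceUpper_mul_phi hx) hx.le
    _ ≤ phi x := by rw [← mul_assoc]; exact mul_le_of_le_one_left (phi_pos x).le hle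

theorem convexOn_phi : ConvexOn ℝ (Ici 1) phi := by
  refine convexOn_of_hasDerivWithinAt2_nonneg (f' := fun x => -x * phi x)
    (f'' := fun x => (x ^ 2 - 1) * phi x) (convex_Ici 1) continuous_phi.continuousOn
    (fun x _ => (hasDerivAt_phi x).hasDerivWithinAt) (fun x _ => ?_) (fun x hx => ?_)
  · refine (((hasDerivAt_neg x).fun_mul (hasDerivAt_phi x)).congr_deriv ?_).hasDerivWithinAt
    ring
  · rw [interior_Ici, mem_Ioi] at hx
    exact mul_nonneg (by nlinarith) (phi_pos x).le

theorem mul_phi_midpoint_le_Phibar_sub {a b : ℝ} (ha : 1 ≤ a) (hab : a ≤ b) :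
    (b - a) * phi ((a + b) / 2) ≤ Phibar a - Phibar b := by
  rw [Phibar_sub_Phibar]
  exact (convexOn_phi.subset (Icc_subset_Ici_self.trans (Ici_subset_Ici.2 ha)) (convex_Icc a b)
    ).mul_midpoint_le_intervalIntegral hab (continuous_phi.intervalIntegrable a b)

theorem concaveOn_sq_mul_Phibar : ConcaveOn ℝ (Icc 1 √2) (fun x => x ^ 2 * Phibar x) := by
  refine concaveOn_of_hasDerivWithinAt2_nonpos (f' := fun x => 2 * x * Phibar x - x ^ 2 * phi x)
    (f'' := fun x => 2 * Phibar x - 4 * x * phi x + x ^ 3 * phi x) (convex_Icc 1 √2)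
    (fun x _ => ?_) (fun x _ => ?_) (fun x _ => ?_) (fun x hx => ?_)
  · exact ((hasDerivAt_pow 2 x).fun_mul (hasDerivAt_Phibar x)).continuousAt.continuousWithinAt
  · refine (((hasDerivAt_pow 2 x).fun_mul (hasDerivAt_Phibar x)).congr_deriv ?_).hasDerivWithinAt
    push_cast; ring
  · refine ((((hasDerivAt_id x).const_mul 2).fun_mul (hasDerivAt_Phibar x)).fun_sub
      ((hasDerivAt_pow 2 x).fun_mul (hasDerivAt_phi x)) |>.congr_deriv ?_).hasDerivWithinAt
    simp only [id_eq]; push_cast; ring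
  · rw [interior_Icc] at hx
    obtain ⟨hx1, hx2⟩ := hx
    have hx0 : 0 < x := by linarith
    have hsq : x ^ 2 < 2 := (Real.lt_sqrt hx0.le).1 hx2
    have hmills := mul_Phibar_le_phi hx0
    have hphi := phi_pos x
    have hquartic : x ^ 4 - 4 * x ^ 2 + 2 < 0 := by nlinarith
    have : x * (2 * Phibar x - 4 * x * phi x + x ^ 3 * phi x) ≤ 0 := by
      nlinarith [mul_neg_of_neg_of_pos hquartic hphi]
    exact nonpos_of_mul_nonpos_right this hx0

theorem Phibar_sqrt_two_lt : 500 * Phibar √2 < 251 * Phibar 1 := by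
  have hs2 : √2 ^ 2 = 2 := sq_sqrt zero_le_two
  have hs_lo : 1.4142 < √2 := (Real.lt_sqrt (by norm_num)).2 (by norm_num)
  have hs_hi : √2 < 1.4143 := (Real.sqrt_lt' (by norm_num)).2 (by norm_num)
  have hphi := phi_pos √2
  have hslab := mul_phi_midpoint_le_Phibar_sub le_rfl (by linarith : (1 : ℝ) ≤ √2)
  have htail := Phibar_le_laplaceUpper_mul_phi (by positivity : (0 : ℝ) < √2)
  have hM : laplaceUpper √2 ≤ 0.544 := by
    have hs3 : √2 ^ 3 = 2 * √2 := by rw [pow_succ, hs2]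
    have hs4 : √2 ^ 4 = 4 := by rw [show 4 = 2 * 2 by rfl, pow_mul, hs2]; norm_num
    have hs5 : √2 ^ 5 = 4 * √2 := by rw [pow_succ, hs4]
    rw [laplaceUpper, hs2, hs3, hs4, hs5, div_le_iff₀ (by positivity)]
    linarith
  have hmid : 0.5418 ≤ (√2 - 1) * exp ((5 - 2 * √2) / 8) := by
    have hy : 0.271425 ≤ (5 - 2 * √2) / 8 := by linarith
    have hexp := (quadratic_le_exp_of_nonneg (by linarith : (0 : ℝ) ≤ (5 - 2 * √2) / 8))
    nlinarith
  have hphi_mid : phi ((1 + √2) / 2) = phi √2 * exp ((5 - 2 * √2) / 8) := by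
    rw [phi_eq_mul_exp _ √2]
    congr 2
    linear_combination (3 / 8 : ℝ) * hs2
  rw [hphi_mid, ← mul_assoc] at hslab
  linarith [mul_le_mul_of_nonneg_right hM hphi.le, mul_le_mul_of_nonneg_right hmid hphi.le]

theorem mills_pos (x : ℝ) : 0 < mills x := div_pos (phi_pos x) (Phibar_pos x)

theorem c2_pos : 0 < c2 := by
  have := Phibar_pos √2
  have := mills_pos √3
  unfold c2 c1
  positivity

theorem h_div_p (x : ℝ) : h x / p x = 2 * c2 * (x ^ 2 * Phibar x) := by
  rw [h, p, div_div_eq_mul_div, div_one]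
  ring

theorem h_div_p_sqrt_two : h √2 / p √2 = 1 + (1 + mills √3) / 250 := by
  have := (Phibar_pos √2).ne'
  rw [h_div_p, sq_sqrt zero_le_two, c2, c1]
  field_simp
  ring

theorem one_lt_h_div_p_one : 1 < h 1 / p 1 := by
  have hΦ := Phibar_pos √2
  have hmills := mills_pos √3
  have hkey := Phibar_sqrt_two_lt
  rw [h_div_p, c2, c1, one_pow, one_mul, ← sub_pos]
  field_simp
  nlinarith [Phibar_pos 1]

theorem h_over_p :
    (∀ x ∈ Set.Icc (1 : ℝ) (Real.sqrt 2),
        min (h 1 / p 1) (h (Real.sqrt 2) / p (Real.sqrt 2)) ≤ h x / p x)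
    ∧ 1 < min (h 1 / p 1) (h (Real.sqrt 2) / p (Real.sqrt 2))
    ∧ ∀ x ∈ Set.Ioo (1 : ℝ) (Real.sqrt 2), p x < h x := by
  have hmin : ∀ x ∈ Icc (1 : ℝ) √2, min (h 1 / p 1) (h √2 / p √2) ≤ h x / p x := by
    intro x hx
    have hs : (1 : ℝ) ≤ √2 := hx.1.trans hx.2
    have hc : (0 : ℝ) ≤ 2 * c2 := by linarith [c2_pos]
    have hseg : x ∈ segment ℝ 1 √2 := by rwa [segment_eq_Icc hs]
    simp only [h_div_p, ← mul_min_of_nonneg _ _ hc]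
    exact mul_le_mul_of_nonneg_left (concaveOn_sq_mul_Phibar.ge_on_segment
      (left_mem_Icc.2 hs) (right_mem_Icc.2 hs) hseg) hc
  have hone : 1 < min (h 1 / p 1) (h √2 / p √2) := by
    refine lt_min one_lt_h_div_p_one ?_
    rw [h_div_p_sqrt_two]
    linarith [mills_pos √3]
  refine ⟨hmin, hone, fun x hx => ?_⟩
  have hp : 0 < p x := by unfold p; have := hx.1; positivity
  exact (one_lt_div hp).1 (hone.trans_le (hmin x (Ioo_subset_Icc_self hx)))
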